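/- Let n ≥ 2, let a₁, a₂, a₃ ∈ ℂ with a₁ ≠ 0, let c ∈ ℂⁿ, let 1 ≤ μ < ν ≤ n, and let g : ℂⁿ → ℂ be a holomorphic function satisfying 2a₂·∂g/∂z_μ(z) + a₃·∂g/∂z_μ(z)·∂g/∂z_ν(z) + 2a₃·∂²g/∂z_μ∂z_ν(z) = 0 for all z ∈ ℂⁿ. Define f(z) = ε·(1/a₁)·e^{g(z−c)/2} with ε ∈ {1, −1}. Then f satisfies a₁²·f(z+c)² + (a₂·∂f/∂z_μ(z) + a₃·∂²f/∂z_μ∂z_ν(z))² = e^{g(z)} for all z ∈ ℂⁿ. -/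

import Mathlib

/-!
Write `E = exp (g / 2)`, so that `f x = (ε / a₁) E (x - c)`. Then `a₁² f(z + c)² = ε² e^{g z}`
with `ε² = 1`, and the chain and product rules give
`a₂ ∂_μ f z + a₃ ∂_ν ∂_μ f z = (ε / a₁) E(y) (2a₂ ∂_μ g + a₃ ∂_μ g ∂_ν g + 2a₃ ∂_ν ∂_μ g)(y) / 4`
at `y = z - c`, which vanishes by the hypothesis on `g`.

The one analytic input is that `∂_μ g` is holomorphic along every `ν`-line. For a jointly
continuous, separately holomorphic `F u w`, Cauchy estimates bound `∂²_u F` uniformly for `w` in a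
compact set, so the difference quotients in `u` converge locally uniformly in `w`, and a locally
uniform limit of holomorphic functions is holomorphic.
-/

open Complex

/-- Complex partial derivative in the `μ`-th coordinate of a function on `ℂⁿ`. -/
noncomputable def pd {n : ℕ} (μ : Fin n) (f : (Fin n → ℂ) → ℂ) : (Fin n → ℂ) → ℂ :=
  fun z => deriv (fun w => f (Function.update z μ w)) (z μ)

open Metric Set Filter Topology

section SeparatelyHolomorphic

variable {E : Type*} [NormedAddCommGroup E] [NormedSpace ℂ E]

lemma norm_deriv_le_of_forall_mem_closedBall_norm_le {f : ℂ → E} (hf : Differentiable ℂ f)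
    {c : ℂ} {R M : ℝ} (hM : ∀ v ∈ closedBall c (R + 1), ‖f v‖ ≤ M) {v : ℂ}
    (hv : v ∈ closedBall c R) : ‖deriv f v‖ ≤ M := by
  simpa using norm_deriv_le_of_forall_mem_sphere_norm_le one_pos hf.diffContOnCl fun w hw =>
    hM w <| mem_closedBall.2 <| by
      linarith [dist_triangle w v c, mem_sphere.1 hw, mem_closedBall.1 hv]

variable [CompleteSpace E]

lemma norm_sub_sub_smul_deriv_le {f : ℂ → E} (hf : Differentiable ℂ f) {u₀ : ℂ} {M : ℝ}
    (hM : ∀ v ∈ closedBall u₀ 3, ‖f v‖ ≤ M) {h : ℂ} (hh : ‖h‖ ≤ 1) :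
    ‖f (u₀ + h) - f u₀ - h • deriv f u₀‖ ≤ M * ‖h‖ ^ 2 := by
  have hM₀ : 0 ≤ M := (norm_nonneg _).trans (hM u₀ (mem_closedBall_self (by norm_num)))
  have hf'' : ∀ v ∈ closedBall u₀ 1, ‖deriv (deriv f) v‖ ≤ M := fun v hv =>
    norm_deriv_le_of_forall_mem_closedBall_norm_le (R := 1) hf.deriv
      (fun w hw => norm_deriv_le_of_forall_mem_closedBall_norm_le (R := 2) hf
        (by norm_num; exact hM) (by norm_num at hw; exact hw)) hv
  have hf'_lip : ∀ v ∈ closedBall u₀ 1, ‖deriv f v - deriv f u₀‖ ≤ M * ‖v - u₀‖ :=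
    fun v hv => (convex_closedBall u₀ 1).norm_image_sub_le_of_norm_deriv_le
      (fun x _ => hf.deriv.differentiableAt) hf'' (mem_closedBall_self zero_le_one) hv
  set ψ : ℂ → E := fun u => f u - (u - u₀) • deriv f u₀
  have hψ : ∀ u, HasDerivAt ψ (deriv f u - deriv f u₀) u := fun u => by
    have := (hf u).hasDerivAt.sub (((hasDerivAt_id u).sub_const u₀).smul_const (deriv f u₀))
    rwa [one_smul] at this
  have hψ' : ∀ v ∈ closedBall u₀ ‖h‖, ‖deriv ψ v‖ ≤ M * ‖h‖ := fun v hv => by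
    rw [(hψ v).deriv]
    refine (hf'_lip v (closedBall_subset_closedBall hh hv)).trans ?_
    gcongr
    exact mem_closedBall_iff_norm.1 hv
  have := (convex_closedBall u₀ ‖h‖).norm_image_sub_le_of_norm_deriv_le
    (fun u _ => (hψ u).differentiableAt) hψ' (mem_closedBall_self (norm_nonneg h))
    (mem_closedBall_iff_norm.2 (by rw [add_sub_cancel_left]))
  simp only [ψ, add_sub_cancel_left, sub_self, zero_smul, sub_zero] at this
  rw [sq, ← mul_assoc, sub_right_comm]
  exact this

theorem differentiable_deriv_of_continuous_uncurry {F : ℂ → ℂ → E}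
    (hF : Continuous (Function.uncurry F)) (hu : ∀ w, Differentiable ℂ (F · w))
    (hw : ∀ u, Differentiable ℂ (F u)) (u₀ : ℂ) :
    Differentiable ℂ fun w => deriv (F · w) u₀ := by
  set q : ℂ → ℂ → E := fun t w => t⁻¹ • (F (u₀ + t) w - F u₀ w)
  have hq : TendstoLocallyUniformlyOn q (fun w => deriv (F · w) u₀) (𝓝[≠] 0) univ := by
    rw [tendstoLocallyUniformlyOn_iff_forall_isCompact isOpen_univ]
    intro K _ hK
    obtain ⟨M, hM⟩ := ((isCompact_closedBall u₀ 3).prod hK).exists_bound_of_continuousOn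
      hF.continuousOn
    have hsmall : Tendsto (fun t : ℂ => M * ‖t‖) (𝓝[≠] 0) (𝓝 0) := by
      simpa using (tendsto_nhdsWithin_of_tendsto_nhds tendsto_norm_zero).const_mul M
    rw [Metric.tendstoUniformlyOn_iff]
    intro ε hε
    filter_upwards [hsmall.eventually (gt_mem_nhds hε), self_mem_nhdsWithin,
      nhdsWithin_le_nhds (closedBall_mem_nhds 0 one_pos)] with t hMt ht₀ ht₁ w hwK
    rw [dist_eq_norm']
    calc ‖q t w - deriv (F · w) u₀‖
        = ‖t‖⁻¹ * ‖F (u₀ + t) w - F u₀ w - t • deriv (F · w) u₀‖ := by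
          rw [← norm_inv, ← norm_smul, smul_sub, smul_smul, inv_mul_cancel₀ ht₀, one_smul]
      _ ≤ ‖t‖⁻¹ * (M * ‖t‖ ^ 2) := by
          gcongr
          exact norm_sub_sub_smul_deriv_le (hu w) (fun v hv => hM (v, w) ⟨hv, hwK⟩)
            (mem_closedBall_zero_iff.1 ht₁)
      _ = M * ‖t‖ := by field_simp [norm_ne_zero_iff.2 ht₀]
      _ < ε := hMt
  rw [← differentiableOn_univ]
  exact hq.differentiableOn (Eventually.of_forall fun t =>
    (((hw _).sub (hw _)).const_smul t⁻¹).differentiableOn) isOpen_univ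

end SeparatelyHolomorphic

section PartialDerivative

open Function

variable {n : ℕ} {μ ν : Fin n}

lemma pd_const_mul (a : ℂ) (φ : (Fin n → ℂ) → ℂ) :
    pd μ (fun x => a * φ x) = fun x => a * pd μ φ x :=
  funext fun _ => deriv_const_mul_field a

lemma pd_div_const (φ : (Fin n → ℂ) → ℂ) (a : ℂ) :
    pd μ (fun x => φ x / a) = fun x => pd μ φ x / a :=
  funext fun _ => deriv_div_const a

lemma pd_comp_sub (φ : (Fin n → ℂ) → ℂ) (c : Fin n → ℂ) :
    pd μ (fun x => φ (x - c)) = fun x => pd μ φ (x - c) := by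
  funext x
  have hshift : (fun w => φ (update x μ w - c)) = fun w => φ (update (x - c) μ (w - c μ)) := by
    funext w
    rw [update_sub, update_eq_self μ c]
  simp only [pd]
  rw [hshift, deriv_comp_sub_const (fun v => φ (update (x - c) μ v))]
  rfl

lemma pd_mul {φ ψ : (Fin n → ℂ) → ℂ} {x : Fin n → ℂ}
    (hφ : DifferentiableAt ℂ (fun w => φ (update x μ w)) (x μ))
    (hψ : DifferentiableAt ℂ (fun w => ψ (update x μ w)) (x μ)) :
    pd μ (fun y => φ y * ψ y) x = pd μ φ x * ψ x + φ x * pd μ ψ x := by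
  have := (hφ.hasDerivAt.mul hψ.hasDerivAt).deriv
  rwa [update_eq_self] at this

lemma pd_cexp {φ : (Fin n → ℂ) → ℂ} {x : Fin n → ℂ}
    (hφ : DifferentiableAt ℂ (fun w => φ (update x μ w)) (x μ)) :
    pd μ (fun y => exp (φ y)) x = exp (φ x) * pd μ φ x := by
  simp only [pd]
  rw [deriv_cexp hφ, update_eq_self]

lemma Differentiable.comp_update {φ : (Fin n → ℂ) → ℂ} (hφ : Differentiable ℂ φ)
    (x : Fin n → ℂ) (μ : Fin n) : Differentiable ℂ fun w => φ (update x μ w) :=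
  fun w => hφ.differentiableAt.comp w (hasDerivAt_update x μ w).differentiableAt

lemma differentiable_pd_update {g : (Fin n → ℂ) → ℂ} (hg : Differentiable ℂ g) (hμν : μ ≠ ν)
    (z : Fin n → ℂ) : Differentiable ℂ fun w => pd μ g (update z ν w) := by
  have hcont : Continuous fun p : ℂ × ℂ => update (update z ν p.2) μ p.1 := by fun_prop
  have := differentiable_deriv_of_continuous_uncurry (F := fun u w => g (update (update z ν w) μ u))
    (hg.continuous.comp hcont) (fun w => hg.comp_update _ μ)
    (fun u => by simpa only [update_comm hμν.symm] using hg.comp_update _ ν) (z μ)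
  simpa only [pd, update_of_ne hμν] using this

variable {g : (Fin n → ℂ) → ℂ}

lemma pd_cexp_half (hg : Differentiable ℂ g) (μ : Fin n) :
    pd μ (fun y => exp (g y / 2)) = fun y => exp (g y / 2) * (pd μ g y / 2) := by
  funext y
  rw [pd_cexp ((hg.comp_update y μ).div_const 2 _), pd_div_const]

lemma pd_pd_cexp_half (hg : Differentiable ℂ g) (hμν : μ ≠ ν) (y : Fin n → ℂ) :
    pd ν (pd μ fun y => exp (g y / 2)) y = exp (g y / 2) * (pd ν g y / 2) * (pd μ g y / 2)
      + exp (g y / 2) * (pd ν (pd μ g) y / 2) := by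
  rw [pd_cexp_half hg μ, pd_mul, pd_cexp_half hg ν, pd_div_const]
  · exact ((hg.comp_update y ν).div_const 2 _).cexp
  · exact ((differentiable_pd_update hg hμν y).div_const 2 _)

end PartialDerivative

theorem stmt14_general {n : ℕ} (a₁ a₂ a₃ : ℂ) (ha₁ : a₁ ≠ 0)
    (c : Fin n → ℂ) (μ ν : Fin n) (hμν : μ < ν)
    (g : (Fin n → ℂ) → ℂ) (hg : Differentiable ℂ g)
    (hpde : ∀ z, 2 * a₂ * pd μ g z + a₃ * pd μ g z * pd ν g z + 2 * a₃ * pd ν (pd μ g) z = 0)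
    (ε : ℂ) (hε : ε = 1 ∨ ε = -1)
    (f : (Fin n → ℂ) → ℂ)
    (hf : ∀ z, f z = ε * (1 / a₁) * Complex.exp (g (z - c) / 2)) :
    ∀ z, a₁ ^ 2 * (f (z + c)) ^ 2 + (a₂ * pd μ f z + a₃ * pd ν (pd μ f) z) ^ 2
      = Complex.exp (g z) := by
  intro z
  set E : (Fin n → ℂ) → ℂ := fun y => exp (g y / 2) with hE
  have hfE : f = fun x => ε * (1 / a₁) * E (x - c) := funext hf
  have hbracket : a₂ * pd μ f z + a₃ * pd ν (pd μ f) z = 0 := by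
    simp only [hfE, pd_const_mul, pd_comp_sub]
    rw [hE, pd_pd_cexp_half hg hμν.ne, pd_cexp_half hg]
    linear_combination (ε * (1 / a₁) * exp (g (z - c) / 2) / 4) * hpde (z - c)
  have hε2 : ε ^ 2 = 1 := by rcases hε with rfl | rfl <;> norm_num
  have hexp : exp (g z / 2) ^ 2 = exp (g z) := by rw [sq, ← exp_add, add_halves]
  rw [hbracket, hf, add_sub_cancel_right]
  field_simp
  linear_combination ε ^ 2 * hexp + exp (g z) * hε2

theorem stmt14 {n : ℕ} (hn : 2 ≤ n) (a₁ a₂ a₃ : ℂ) (ha₁ : a₁ ≠ 0)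
    (c : Fin n → ℂ) (μ ν : Fin n) (hμν : μ < ν)
    (g : (Fin n → ℂ) → ℂ) (hg : Differentiable ℂ g)
    (hpde : ∀ z, 2 * a₂ * pd μ g z + a₃ * pd μ g z * pd ν g z + 2 * a₃ * pd ν (pd μ g) z = 0)
    (ε : ℂ) (hε : ε = 1 ∨ ε = -1)
    (f : (Fin n → ℂ) → ℂ)
    (hf : ∀ z, f z = ε * (1 / a₁) * Complex.exp (g (z - c) / 2)) :
    ∀ z, a₁ ^ 2 * (f (z + c)) ^ 2 + (a₂ * pd μ f z + a₃ * pd ν (pd μ f) z) ^ 2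
      = Complex.exp (g z) :=
  stmt14_general a₁ a₂ a₃ ha₁ c μ ν hμν g hg hpde ε hε f hf
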